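/- arXiv:2201.11174 — 2 statements merged into one kernel-verified Lean document; each statement's English description precedes it below -/
import Mathlib

section
/- Let a, b ∈ ℚ with a ≠ 0 and let α be an algebraic integer of degree d over ℚ with complex conjugates β₁, …, β_d (under a fixed embedding of ℚ̄ into ℂ). Then h(aα + b) ≤ (1/d) Σ_{i=1}^d log⁺| β_i + b/a | + Δ(a,b). -/
/-!
Write `aα + b = a (α + b/a)`. The minimal polynomial of `aα + b` is obtained from that of `α` by
a translation and a rescaling of the roots, so its complex roots are the `a (βᵢ + b/a)`, and
`log⁺ |a (βᵢ + b/a)| ≤ log⁺ |βᵢ + b/a| + log⁺ |a|`. For the leading-coefficient term, with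
`L = lcm (den a, den b)` the number `L (aα + b) = (La) α + Lb` is an algebraic integer, so `L ^ d`
clears the denominators of the minimal polynomial of `aα + b`; and
`log L = ∑_p log⁺ max (|a|_p, |b|_p)`, because `|q|_p = p ^ v_p(den q)` whenever `p ∣ den q`.
-/

noncomputable section

/-- The field of algebraic numbers, `ℚ̄`. -/
abbrev Qbar : Type := AlgebraicClosure ℚ

/-- `log⁺ x = max (log x) 0` (for `x ≥ 0`). -/
def logPlus (x : ℝ) : ℝ := Real.log (max 1 x)

/-- The absolute Weil height, via the Mahler-measure formula
`h(α) = (1/d) (log a_d + ∑_i log⁺ |α_i|)`, where `a_d` is the (positive) leading coefficient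
of the primitive integer minimal polynomial of `α` and the `α_i` are the conjugates of `α`
in `ℂ`. -/
def weilHeight (α : Qbar) : ℝ :=
  ((minpoly ℚ α).natDegree : ℝ)⁻¹ *
    (Real.log (sInf {n : ℕ | 0 < n ∧ ∀ i, (((minpoly ℚ α).coeff i) * (n : ℚ)).den = 1} : ℕ) +
     (((minpoly ℚ α).aroots ℂ).map (fun z => logPlus ‖z‖)).sum)

/-- The essential minimum of a real-valued function:
`μ^ess(f) = inf {θ : {α | f α ≤ θ} is infinite}`. -/
def essMin {X : Type} (f : X → ℝ) : ℝ :=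
  sInf {θ : ℝ | {α : X | f α ≤ θ}.Infinite}

/-- The height `h_{a,b}(α) = h(α) + h(aα + b)`. -/
def hab (a b : Qbar) (α : Qbar) : ℝ := weilHeight α + weilHeight (a * α + b)

/-- `Δ(a,b) = ∑_p log⁺ max (|a|_p, |b|_p) + log⁺ |a|` for rationals `a, b`. -/
def Delta (a b : ℚ) : ℝ :=
  (∑ᶠ p ∈ {p : ℕ | p.Prime}, logPlus ((max (padicNorm p a) (padicNorm p b) : ℚ) : ℝ))
  + logPlus |(a : ℝ)|

open Polynomial

lemma logPlus_mono : Monotone logPlus := fun _ _ h =>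
  Real.log_le_log (lt_of_lt_of_le one_pos (le_max_left _ _)) (max_le_max le_rfl h)

lemma logPlus_of_le_one {x : ℝ} (h : x ≤ 1) : logPlus x = 0 := by
  rw [logPlus, max_eq_left h, Real.log_one]

lemma logPlus_of_one_le {x : ℝ} (h : 1 ≤ x) : logPlus x = Real.log x := by
  rw [logPlus, max_eq_right h]

lemma logPlus_mul_le {x y : ℝ} (hy : 0 ≤ y) : logPlus (x * y) ≤ logPlus x + logPlus y := by
  have hx1 : 1 ≤ max 1 x := le_max_left _ _
  have hy1 : 1 ≤ max 1 y := le_max_left _ _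
  calc logPlus (x * y) ≤ Real.log (max 1 x * max 1 y) :=
        Real.log_le_log (by positivity) (max_le (one_le_mul_of_one_le_of_one_le hx1 hy1)
          (mul_le_mul (le_max_right _ _) (le_max_right _ _) hy (by linarith)))
    _ = logPlus x + logPlus y := Real.log_mul (by positivity) (by positivity)

lemma sum_logPlus_norm_mul_le {ι E : Type*} [SeminormedRing E] (s : Multiset ι) (f : ι → E)
    (c : E) : (s.map fun i => logPlus ‖c * f i‖).sum ≤
      (s.map fun i => logPlus ‖f i‖).sum + Multiset.card s * logPlus ‖c‖ := by
  calc (s.map fun i => logPlus ‖c * f i‖).sum ≤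
        (s.map fun i => logPlus ‖f i‖ + logPlus ‖c‖).sum :=
        Multiset.sum_map_le_sum_map _ _ fun i _ =>
          (logPlus_mono (norm_mul_le c (f i))).trans <| by
            rw [add_comm]; exact logPlus_mul_le (norm_nonneg _)
    _ = _ := by
        rw [Multiset.sum_map_add, Multiset.map_const', Multiset.sum_replicate, nsmul_eq_mul]

lemma logPlus_padicNorm {p : ℕ} (hp : p.Prime) (q : ℚ) :
    logPlus (padicNorm p q) = q.den.factorization p * Real.log p := by
  have : Fact p.Prime := ⟨hp⟩
  by_cases hdvd : p ∣ q.den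
  · have hq : q ≠ 0 := by rintro rfl; simp [hp.ne_one] at hdvd
    have hnum : ¬ p ∣ q.num.natAbs := fun h => hp.not_dvd_one (q.reduced ▸ Nat.dvd_gcd h hdvd)
    have hnorm : padicNorm p q = (p : ℚ) ^ q.den.factorization p := by
      rw [padicNorm.eq_zpow_of_nonzero hq, padicValRat, padicValInt,
        padicValNat.eq_zero_of_not_dvd hnum, ← Nat.factorization_def _ hp]
      simp
    rw [hnorm, Rat.cast_pow, Rat.cast_natCast, logPlus_of_one_le
      (one_le_pow₀ (by exact_mod_cast hp.one_le)), Real.log_pow]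
  · rw [Nat.factorization_eq_zero_of_not_dvd hdvd, Nat.cast_zero, zero_mul, logPlus_of_le_one]
    rw [← Padic.eq_padicNorm]
    exact Padic.norm_rat_le_one hdvd

lemma finsum_logPlus_padicNorm_max (a b : ℚ) :
    ∑ᶠ p ∈ {p : ℕ | p.Prime}, logPlus ((max (padicNorm p a) (padicNorm p b) : ℚ) : ℝ) =
      Real.log (Nat.lcm a.den b.den) := by
  set L := Nat.lcm a.den b.den
  have hsummand : ∀ p ∈ {p : ℕ | p.Prime},
      logPlus ((max (padicNorm p a) (padicNorm p b) : ℚ) : ℝ) = L.factorization p * Real.log p := by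
    intro p hp
    rw [Rat.cast_max, logPlus_mono.map_max, logPlus_padicNorm hp, logPlus_padicNorm hp,
      Nat.factorization_lcm a.den_nz b.den_nz, Finsupp.sup_apply, Nat.cast_max,
      max_mul_of_nonneg _ _ (Real.log_natCast_nonneg p)]
  rw [finsum_mem_congr rfl hsummand, Real.log_nat_eq_sum_factorization, Finsupp.sum,
    Nat.support_factorization]
  refine finsum_mem_eq_sum_of_inter_support_eq _ (Set.ext fun p => ?_)
  simp only [Set.mem_inter_iff, Set.mem_ofPred_eq, Finset.mem_coe, Nat.mem_primeFactors,
    Function.mem_support, mul_ne_zero_iff, Nat.cast_ne_zero]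
  exact ⟨fun ⟨hp, hf, hl⟩ => ⟨⟨hp, Nat.dvd_of_factorization_pos hf,
    Nat.lcm_ne_zero a.den_nz b.den_nz⟩, hf, hl⟩, fun ⟨⟨hp, _⟩, hf, hl⟩ => ⟨hp, hf, hl⟩⟩

lemma Polynomial.roots_comp_X_sub_C {R : Type*} [CommRing R] [IsDomain R] (p : R[X]) (c : R) :
    (p.comp (X - C c)).roots = p.roots.map (· + c) := by
  classical
  ext t
  obtain ⟨s, rfl⟩ : ∃ s, s + c = t := ⟨t - c, sub_add_cancel t c⟩
  rw [Multiset.count_map_eq_count' _ _ (add_left_injective c), count_roots, count_roots,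
    rootMultiplicity_eq_rootMultiplicity (p := p), rootMultiplicity_eq_rootMultiplicity]
  simp [comp_assoc, ← add_assoc]

lemma Polynomial.aroots_scaleRoots_comp_X_sub_C {K S : Type*} [Field K] [CommRing S] [IsDomain S]
    [Algebra K S] {p : K[X]} (hp : p ≠ 0) {a : K} (ha : a ≠ 0) (c : K) :
    ((p.comp (X - C c)).scaleRoots a).aroots S =
      (p.aroots S).map (fun y => algebraMap K S a * (y + algebraMap K S c)) := by
  have hlc : algebraMap K S (p.comp (X - C c)).leadingCoeff ≠ 0 := by
    simp [Polynomial.comp_eq_zero_iff, hp]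
  rw [aroots_def, map_scaleRoots _ _ _ hlc, roots_scaleRoots _ ((IsUnit.mk0 a ha).map _),
    Polynomial.map_comp, Polynomial.map_sub, map_X, map_C, roots_comp_X_sub_C, Multiset.map_map,
    aroots_def]
  rfl

section AffineImage

variable {K L : Type*} [Field K] [Field L] [Algebra K L] {a : K} {x : L}

lemma minpoly.algebraMap_mul_add_algebraMap (ha : a ≠ 0) (b : K) (hx : IsIntegral K x) :
    minpoly K (algebraMap K L a * x + algebraMap K L b) =
      ((minpoly K x).comp (X - C (b / a))).scaleRoots a := by
  have : algebraMap K L a * x + algebraMap K L b = a • (x + algebraMap K L (b / a)) := by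
    rw [Algebra.smul_def, map_div₀, mul_add, mul_div_cancel₀ _ (by simpa using ha)]
  rw [this, IsIntegrallyClosed.minpoly_smul ha (hx.add isIntegral_algebraMap),
    minpoly.add_algebraMap]

lemma minpoly.natDegree_algebraMap_mul_add_algebraMap (ha : a ≠ 0) (b : K) (hx : IsIntegral K x) :
    (minpoly K (algebraMap K L a * x + algebraMap K L b)).natDegree = (minpoly K x).natDegree := by
  rw [algebraMap_mul_add_algebraMap ha b hx, natDegree_scaleRoots, natDegree_comp,
    natDegree_X_sub_C, mul_one]

lemma minpoly.aroots_algebraMap_mul_add_algebraMap (ha : a ≠ 0) (b : K) (hx : IsIntegral K x)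
    (S : Type*) [CommRing S] [IsDomain S] [Algebra K S] :
    (minpoly K (algebraMap K L a * x + algebraMap K L b)).aroots S =
      ((minpoly K x).aroots S).map (fun y => algebraMap K S a * (y + algebraMap K S (b / a))) := by
  rw [algebraMap_mul_add_algebraMap ha b hx, aroots_scaleRoots_comp_X_sub_C (ne_zero hx) ha]

end AffineImage

lemma isIntegral_natCast_mul_ratCast {A : Type*} [Field A] [CharZero A] [Algebra ℤ A] {n : ℕ}
    {q : ℚ} (h : q.den ∣ n) : IsIntegral ℤ ((n : A) * q) := by
  obtain ⟨k, rfl⟩ := h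
  have : ((q.den * k : ℕ) : A) * q = ((k * q.num : ℤ) : A) := by
    have h := congrArg (Rat.cast : ℚ → A) (Rat.mul_den_eq_num q)
    push_cast at h ⊢
    linear_combination (k : A) * h
  rw [this, ← eq_intCast (algebraMap ℤ A)]
  exact isIntegral_algebraMap

lemma isIntegral_lcm_den_mul_mul_add {A : Type*} [Field A] [CharZero A] [Algebra ℤ A] (a b : ℚ)
    {α : A} (hα : IsIntegral ℤ α) : IsIntegral ℤ ((Nat.lcm a.den b.den : A) * (a * α + b)) := by
  rw [mul_add, ← mul_assoc]
  exact ((isIntegral_natCast_mul_ratCast (Nat.dvd_lcm_left a.den b.den)).mul hα).add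
    (isIntegral_natCast_mul_ratCast (Nat.dvd_lcm_right a.den b.den))

lemma minpoly_coeff_den_eq_one {L : Type*} [Field L] [Algebra ℚ L] {x : L}
    (hx : IsIntegral ℤ x) (i : ℕ) : ((minpoly ℚ x).coeff i).den = 1 := by
  rw [minpoly.isIntegrallyClosed_eq_field_fractions' ℚ hx, coeff_map, eq_intCast, Rat.den_intCast]

lemma minpoly_coeff_mul_pow_den_eq_one {L : Type*} [Field L] [Algebra ℚ L] {x : L} {n : ℕ}
    (hn : n ≠ 0) (hnx : IsIntegral ℤ ((n : L) * x)) (i : ℕ) :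
    ((minpoly ℚ x).coeff i * ((n ^ (minpoly ℚ x).natDegree : ℕ) : ℚ)).den = 1 := by
  set d := (minpoly ℚ x).natDegree
  rcases lt_or_ge d i with hi | hi
  · simp [coeff_eq_zero_of_natDegree_lt hi]
  have hnQ : (n : ℚ) ≠ 0 := by exact_mod_cast hn
  have hx : IsIntegral ℚ x := by
    have := (hnx.tower_top (A := ℚ)).smul (n : ℚ)⁻¹
    rwa [← map_natCast (algebraMap ℚ L), Algebra.smul_def, map_inv₀,
      inv_mul_cancel_left₀ ((_root_.map_ne_zero _).mpr hnQ)] at this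
  -- The coefficients of the minimal polynomial of `n x` are integers and equal `cᵢ n ^ (d - i)`.
  have hint := minpoly_coeff_den_eq_one (x := (n : ℚ) • x)
    (by simpa only [Algebra.smul_def, map_natCast] using hnx) i
  rw [IsIntegrallyClosed.minpoly_smul hnQ hx, coeff_scaleRoots] at hint
  have : (minpoly ℚ x).coeff i * ((n ^ d : ℕ) : ℚ) =
      (minpoly ℚ x).coeff i * (n : ℚ) ^ (d - i) * (n : ℚ) ^ i := by
    rw [mul_assoc, ← pow_add, Nat.sub_add_cancel hi, Nat.cast_pow]
  rw [this, ← Rat.coe_int_num_of_den_eq_one hint]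
  generalize ((minpoly ℚ x).coeff i * _).num = z
  exact_mod_cast Rat.den_intCast (z * (n : ℤ) ^ i)

lemma weilHeight_le_of_coeff_mul_den_eq_one {x : Qbar} {n : ℕ} (hn : 0 < n)
    (h : ∀ i, ((minpoly ℚ x).coeff i * (n : ℚ)).den = 1) :
    weilHeight x ≤ ((minpoly ℚ x).natDegree : ℝ)⁻¹ *
      (Real.log n + (((minpoly ℚ x).aroots ℂ).map (fun z => logPlus ‖z‖)).sum) := by
  set S := {m : ℕ | 0 < m ∧ ∀ i, ((minpoly ℚ x).coeff i * (m : ℚ)).den = 1}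
  have hnS : n ∈ S := ⟨hn, h⟩
  rw [weilHeight]
  gcongr
  · exact_mod_cast (Nat.sInf_mem ⟨n, hnS⟩).1
  · exact Nat.sInf_le hnS

/-- For `a, b ∈ ℚ`, `a ≠ 0` and an algebraic integer `α` of degree `d` with complex
conjugates `β₁, …, β_d` (the roots in `ℂ` of its minimal polynomial),
`h(aα + b) ≤ (1/d) ∑_i log⁺ |β_i + b/a| + Δ(a,b)`. -/
theorem height_linear_le (a b : ℚ) (ha : a ≠ 0) (α : Qbar) (hα : IsIntegral ℤ α) :
    weilHeight ((a : Qbar) * α + (b : Qbar)) ≤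
      ((minpoly ℚ α).natDegree : ℝ)⁻¹ *
        (((minpoly ℚ α).aroots ℂ).map
          (fun β => logPlus ‖β + ((b / a : ℚ) : ℂ)‖)).sum
      + Delta a b := by
  have hαQ : IsIntegral ℚ α := hα.tower_top
  set d := (minpoly ℚ α).natDegree
  set L := Nat.lcm a.den b.den
  have hdeg : (minpoly ℚ ((a : Qbar) * α + b)).natDegree = d := by
    simpa only [eq_ratCast] using minpoly.natDegree_algebraMap_mul_add_algebraMap ha b hαQ
  have hroots : (minpoly ℚ ((a : Qbar) * α + b)).aroots ℂ =
      ((minpoly ℚ α).aroots ℂ).map (fun β => (a : ℂ) * (β + ((b / a : ℚ) : ℂ))) := by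
    simpa only [eq_ratCast] using minpoly.aroots_algebraMap_mul_add_algebraMap ha b hαQ ℂ
  have hden := minpoly_coeff_mul_pow_den_eq_one (Nat.lcm_ne_zero a.den_nz b.den_nz)
    (isIntegral_lcm_den_mul_mul_add a b hα)
  rw [hdeg] at hden
  refine (weilHeight_le_of_coeff_mul_den_eq_one
    (pow_pos (Nat.lcm_pos a.den_pos b.den_pos) d) hden).trans ?_
  have hconj := sum_logPlus_norm_mul_le ((minpoly ℚ α).aroots ℂ) (· + ((b / a : ℚ) : ℂ)) (a : ℂ)
  rw [IsAlgClosed.card_aroots_eq_natDegree, Complex.norm_ratCast] at hconj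
  have hd : (0 : ℝ) < d := by exact_mod_cast minpoly.natDegree_pos hαQ
  rw [hdeg, hroots, Multiset.map_map, Delta, finsum_logPlus_padicNorm_max]
  calc _ ≤ (d : ℝ)⁻¹ * (d * Real.log L +
        ((((minpoly ℚ α).aroots ℂ).map fun β => logPlus ‖β + ((b / a : ℚ) : ℂ)‖).sum +
          d * logPlus |(a : ℝ)|)) := by
        rw [Nat.cast_pow, Real.log_pow]
        gcongr
        exact hconj
    _ = _ := by field_simp; ring

end
end

section
/- Let a, b ∈ ℚ̄ with a ≠ 0 and b ≠ 0, and suppose there exists σ₀ ∈ G(a,b) such that |σ₀(a)| − |σ₀(b)| > 1. Then (1/[K_{a,b}:ℚ]) · log( |σ₀(a)| / (|σ₀(b)| + 1) ) ≤ μ^ess(h_{a,b}). -/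
noncomputable section

set_option maxHeartbeats 2000000
set_option synthInstance.maxHeartbeats 1000000

/-- Compatibility: the complex absolute value as an `AbsoluteValue`, equal to the norm. -/
def Complex.abs : AbsoluteValue ℂ ℝ := IsAbsoluteValue.toAbsoluteValue (norm : ℂ → ℝ)

theorem Complex.norm_eq_abs (z : ℂ) : ‖z‖ = Complex.abs z := rfl

theorem Complex.abs_ofReal (r : ℝ) : Complex.abs (r : ℂ) = |r| := by
  rw [← Complex.norm_eq_abs, Complex.norm_real, Real.norm_eq_abs]

/-- `K_{a,b}`: the Galois closure of `ℚ(a,b)` over `ℚ` (inside `ℚ̄`). -/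
def Kab (a b : Qbar) : IntermediateField ℚ Qbar :=
  IntermediateField.normalClosure ℚ (↥(IntermediateField.adjoin ℚ {a, b})) Qbar

theorem a_mem_Kab (a b : Qbar) : a ∈ Kab a b :=
  IntermediateField.le_normalClosure _
    (IntermediateField.subset_adjoin ℚ {a, b} (Set.mem_insert a {b}))

theorem b_mem_Kab (a b : Qbar) : b ∈ Kab a b :=
  IntermediateField.le_normalClosure _
    (IntermediateField.subset_adjoin ℚ {a, b} (Set.mem_insert_of_mem a rfl))

/-- The conjugate `σ(a)` for `σ ∈ G(a,b) = Gal(K_{a,b}/ℚ)`, as an element of `ℚ̄`. -/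
def sigA (a b : Qbar) (σ : Kab a b ≃ₐ[ℚ] Kab a b) : Qbar := σ ⟨a, a_mem_Kab a b⟩

/-- The conjugate `σ(b)` for `σ ∈ G(a,b) = Gal(K_{a,b}/ℚ)`, as an element of `ℚ̄`. -/
def sigB (a b : Qbar) (σ : Kab a b ≃ₐ[ℚ] Kab a b) : Qbar := σ ⟨b, b_mem_Kab a b⟩

/-! ### Auxiliary lemmas -/

open Polynomial IntermediateField Module

lemma logPlus_nonneg (x : ℝ) : 0 ≤ logPlus x := Real.log_nonneg (le_max_left _ _)

lemma logPlus_inv {x : ℝ} (hx : 0 < x) : logPlus x⁻¹ = logPlus x - Real.log x := by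
  unfold logPlus
  have h1 : max 1 x⁻¹ = max 1 x / x := by
    rcases le_total x 1 with h | h
    · rw [max_eq_left h, max_eq_right (by rw [le_inv_comm₀ one_pos hx]; simpa using h)]
      exact (one_div x).symm
    · rw [max_eq_right h, max_eq_left (by rw [inv_le_comm₀ hx one_pos]; simpa using h),
        div_self (ne_of_gt hx)]
  rw [h1, Real.log_div (by positivity) (ne_of_gt hx)]

lemma multiset_log_prod (m : Multiset ℝ) (h : ∀ x ∈ m, 0 < x) :
    (m.map Real.log).sum = Real.log m.prod := by
  refine Multiset.induction_on m (by simp) ?_ h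
  intro a s hs h
  rw [Multiset.map_cons, Multiset.sum_cons, Multiset.prod_cons,
    Real.log_mul (ne_of_gt (h a (Multiset.mem_cons_self a s)))
      (ne_of_gt (Multiset.prod_pos (fun x hx => h x (Multiset.mem_cons_of_mem hx)))),
    hs (fun x hx => h x (Multiset.mem_cons_of_mem hx))]

lemma multiset_sum_map_sub (m : Multiset ℂ) (f g : ℂ → ℝ) :
    (m.map (fun z => f z - g z)).sum = (m.map f).sum - (m.map g).sum := by
  refine Multiset.induction_on m (by simp) ?_
  intro a s hs
  simp only [Multiset.map_cons, Multiset.sum_cons, hs]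
  ring

lemma den_mul_eq_one {c : ℚ} {n : ℕ} (h : c.den ∣ n) : (c * n).den = 1 := by
  obtain ⟨k, rfl⟩ := h
  have : c * ((c.den * k : ℕ) : ℚ) = ((c.num * k : ℤ) : ℚ) := by
    push_cast
    rw [← mul_assoc, Rat.mul_den_eq_num]
  rw [this, Rat.den_intCast]

lemma denomSet_nonempty (f : Polynomial ℚ) :
    ∃ n : ℕ, 0 < n ∧ ∀ i, ((f.coeff i) * (n : ℚ)).den = 1 := by
  refine ⟨∏ i ∈ f.support, (f.coeff i).den, Finset.prod_pos fun i _ => (f.coeff i).pos, ?_⟩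
  intro i
  by_cases hi : i ∈ f.support
  · exact den_mul_eq_one (Finset.dvd_prod_of_mem _ hi)
  · rw [Polynomial.notMem_support_iff.mp hi, zero_mul, Rat.den_ofNat]

lemma den_one_abs_ge {q : ℚ} (hq : q ≠ 0) (h : q.den = 1) : 1 ≤ |q| := by
  have h1 : ((q.num : ℤ) : ℚ) = q := Rat.coe_int_num_of_den_eq_one h
  have h2 : q.num ≠ 0 := by
    intro h0; apply hq; rw [← h1, h0]; simp
  have h3 : (1 : ℤ) ≤ |q.num| := Int.one_le_abs h2
  calc (1:ℚ) ≤ ((|q.num| : ℤ) : ℚ) := by exact_mod_cast h3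
    _ = |q| := by rw [Int.cast_abs, h1]

lemma isIntegral_qbar (γ : Qbar) : IsIntegral ℚ γ :=
  ((AlgebraicClosure.isAlgebraic ℚ).isAlgebraic γ).isIntegral

/-- The "denominator" of (the minimal polynomial of) `γ`. -/
def dstar (γ : Qbar) : ℕ :=
  sInf {n : ℕ | 0 < n ∧ ∀ i, (((minpoly ℚ γ).coeff i) * (n : ℚ)).den = 1}

lemma dstar_mem (γ : Qbar) : 0 < dstar γ ∧
    ∀ i, (((minpoly ℚ γ).coeff i) * ((dstar γ : ℕ) : ℚ)).den = 1 :=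
  Nat.sInf_mem (denomSet_nonempty (minpoly ℚ γ))

lemma one_le_dstar (γ : Qbar) : 1 ≤ dstar γ := (dstar_mem γ).1

lemma weilHeight_eq (γ : Qbar) : weilHeight γ =
    ((minpoly ℚ γ).natDegree : ℝ)⁻¹ *
    (Real.log (dstar γ) +
     (((minpoly ℚ γ).aroots ℂ).map (fun z => logPlus (Complex.abs z))).sum) := rfl

lemma weilHeight_nonneg (γ : Qbar) : 0 ≤ weilHeight γ := by
  rw [weilHeight_eq]
  apply mul_nonneg (by positivity)
  apply add_nonneg
  · exact Real.log_nonneg (by exact_mod_cast one_le_dstar γ)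
  · apply Multiset.sum_nonneg
    intro x hx
    obtain ⟨z, _, rfl⟩ := Multiset.mem_map.mp hx
    exact logPlus_nonneg _

lemma fiber_card (E M : IntermediateField ℚ Qbar) (hEM : E ≤ M) [FiniteDimensional ℚ M]
    (φ : E →ₐ[ℚ] ℂ) :
    Nat.card {ψ : M →ₐ[ℚ] ℂ // ψ.comp (inclusion hEM) = φ} * finrank ℚ E = finrank ℚ M := by
  haveI : FiniteDimensional ℚ E := FiniteDimensional.of_injective
    (IntermediateField.inclusion hEM).toLinearMap (IntermediateField.inclusion hEM).injective
  letI : Algebra E M := (inclusion hEM).toRingHom.toAlgebra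
  haveI : IsScalarTower ℚ E M := IsScalarTower.of_algebraMap_eq fun r => Subtype.ext rfl
  haveI : FiniteDimensional E M := FiniteDimensional.right ℚ E M
  letI : Algebra E ℂ := φ.toRingHom.toAlgebra
  haveI : IsScalarTower ℚ E ℂ := IsScalarTower.of_algebraMap_eq fun r => (φ.commutes r).symm
  haveI : CharZero E := charZero_of_injective_algebraMap (algebraMap ℚ E).injective
  have e : {ψ : M →ₐ[ℚ] ℂ // ψ.comp (inclusion hEM) = φ} ≃ (M →ₐ[E] ℂ) := by
    refine ⟨fun ψ => ⟨ψ.1.toRingHom, fun e => ?_⟩,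
      fun χ => ⟨χ.restrictScalars ℚ, ?_⟩, fun ψ => rfl, fun χ => rfl⟩
    · exact (congrArg (fun g : E →ₐ[ℚ] ℂ => g e) ψ.2 : _)
    · ext e
      exact χ.commutes e
  rw [Nat.card_congr e]
  have := AlgHom.card E M ℂ
  rw [Nat.card_eq_fintype_card, this, mul_comm]
  exact (finrank_mul_finrank ℚ E M)

lemma aroots_nodup (γ : Qbar) : ((minpoly ℚ γ).aroots ℂ).Nodup :=
  Polynomial.nodup_roots ((minpoly.irreducible (isIntegral_qbar γ)).separable.map)

lemma multiset_sum_subtype (m : Multiset ℂ) (hm : m.Nodup) (f : ℂ → ℝ)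
    [Fintype {x // x ∈ m}] :
    ∑ x : {x // x ∈ m}, f x = (m.map f).sum := by
  classical
  have h1 : ∑ x : {x // x ∈ m}, f x = ∑ x : {x // x ∈ m.toFinset}, f x :=
    Fintype.sum_equiv (Equiv.subtypeEquivRight (fun x => (Multiset.mem_toFinset).symm))
      _ _ (fun x => rfl)
  rw [h1, Finset.sum_coe_sort m.toFinset f]
  show (m.toFinset.val.map f).sum = _
  rw [Multiset.toFinset_val, Multiset.dedup_eq_self.mpr hm]

lemma key_sum (M : IntermediateField ℚ Qbar) [FiniteDimensional ℚ M]
    (γ : Qbar) (hγ : γ ∈ M) (f : ℂ → ℝ) :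
    ((minpoly ℚ γ).natDegree : ℝ) * ∑ ψ : M →ₐ[ℚ] ℂ, f (ψ ⟨γ, hγ⟩) =
      (finrank ℚ M : ℝ) * (((minpoly ℚ γ).aroots ℂ).map f).sum := by
  classical
  have hint : IsIntegral ℚ γ := isIntegral_qbar γ
  have hKM : ℚ⟮γ⟯ ≤ M := by
    rw [adjoin_simple_le_iff]; exact hγ
  haveI : FiniteDimensional ℚ ℚ⟮γ⟯ := IntermediateField.adjoin.finiteDimensional hint
  set g : (M →ₐ[ℚ] ℂ) → (ℚ⟮γ⟯ →ₐ[ℚ] ℂ) := fun ψ => ψ.comp (inclusion hKM) with hg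
  have h1 : ∑ ψ : M →ₐ[ℚ] ℂ, f (ψ ⟨γ, hγ⟩)
      = ∑ φ : ℚ⟮γ⟯ →ₐ[ℚ] ℂ, ∑ ψ ∈ Finset.univ.filter (fun ψ => g ψ = φ), f (ψ ⟨γ, hγ⟩) :=
    (Finset.sum_fiberwise_of_maps_to (fun ψ _ => Finset.mem_univ (g ψ)) _).symm
  have h2 : ∀ φ : ℚ⟮γ⟯ →ₐ[ℚ] ℂ,
      ∑ ψ ∈ Finset.univ.filter (fun ψ => g ψ = φ), f (ψ ⟨γ, hγ⟩)
        = ((Finset.univ.filter (fun ψ => g ψ = φ)).card : ℝ) * f (φ (AdjoinSimple.gen ℚ γ)) := by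
    intro φ
    rw [Finset.sum_congr rfl (fun ψ hψ => ?_), Finset.sum_const, nsmul_eq_mul]
    have hres : g ψ = φ := (Finset.mem_filter.mp hψ).2
    have : ψ ⟨γ, hγ⟩ = φ (AdjoinSimple.gen ℚ γ) := by
      rw [← hres]; rfl
    rw [this]
  have hcard : ∀ φ : ℚ⟮γ⟯ →ₐ[ℚ] ℂ,
      ((Finset.univ.filter (fun ψ => g ψ = φ)).card) * (minpoly ℚ γ).natDegree
        = finrank ℚ M := by
    intro φ
    have := fiber_card ℚ⟮γ⟯ M hKM φ
    rw [Nat.card_eq_fintype_card, Fintype.card_subtype] at this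
    rw [← IntermediateField.adjoin.finrank hint]
    exact this
  have h3 : ∑ φ : ℚ⟮γ⟯ →ₐ[ℚ] ℂ, f (φ (AdjoinSimple.gen ℚ γ))
      = (((minpoly ℚ γ).aroots ℂ).map f).sum := by
    haveI : Fintype {x // x ∈ (minpoly ℚ γ).aroots ℂ} :=
      Fintype.ofEquiv _ (IntermediateField.algHomAdjoinIntegralEquiv ℚ (K := ℂ) (α := γ) hint)
    have h4 : ∑ φ : ℚ⟮γ⟯ →ₐ[ℚ] ℂ, f (φ (AdjoinSimple.gen ℚ γ))
        = ∑ x : {x // x ∈ (minpoly ℚ γ).aroots ℂ}, f x := by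
      refine Fintype.sum_equiv (IntermediateField.algHomAdjoinIntegralEquiv ℚ (K := ℂ) hint)
        _ _ (fun φ => ?_)
      rw [← IntermediateField.algHomAdjoinIntegralEquiv_symm_apply_gen ℚ (K := ℂ)
        hint ((IntermediateField.algHomAdjoinIntegralEquiv ℚ (K := ℂ) hint) φ),
        Equiv.symm_apply_apply]
      rfl
    rw [h4, multiset_sum_subtype _ (aroots_nodup γ) f]
  calc ((minpoly ℚ γ).natDegree : ℝ) * ∑ ψ : M →ₐ[ℚ] ℂ, f (ψ ⟨γ, hγ⟩)
      = ∑ φ : ℚ⟮γ⟯ →ₐ[ℚ] ℂ, ((minpoly ℚ γ).natDegree : ℝ) *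
          (((Finset.univ.filter (fun ψ => g ψ = φ)).card : ℝ) *
            f (φ (AdjoinSimple.gen ℚ γ))) := by
        rw [h1, Finset.mul_sum]
        exact Finset.sum_congr rfl fun φ _ => by rw [h2 φ]
    _ = ∑ φ : ℚ⟮γ⟯ →ₐ[ℚ] ℂ, (finrank ℚ M : ℝ) * f (φ (AdjoinSimple.gen ℚ γ)) := by
        refine Finset.sum_congr rfl fun φ _ => ?_
        rw [← mul_assoc]
        congr 1
        rw [← hcard φ]
        push_cast
        ring
    _ = (finrank ℚ M : ℝ) * (((minpoly ℚ γ).aroots ℂ).map f).sum := by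
        rw [← Finset.mul_sum, h3]

lemma sum_logPlus_inv_le (γ : Qbar) (hγ0 : γ ≠ 0) :
    (((minpoly ℚ γ).aroots ℂ).map (fun z => logPlus (Complex.abs z)⁻¹)).sum ≤
      Real.log (dstar γ) +
        (((minpoly ℚ γ).aroots ℂ).map (fun z => logPlus (Complex.abs z))).sum := by
  have hmem := dstar_mem γ
  have hint := isIntegral_qbar γ
  have hc0 : (minpoly ℚ γ).coeff 0 ≠ 0 := minpoly.coeff_zero_ne_zero hint hγ0
  set p := minpoly ℚ γ with hp
  set m := p.aroots ℂ with hm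
  have hz0 : ∀ z ∈ m, z ≠ 0 := by
    intro z hz h0
    obtain ⟨-, hev⟩ := mem_aroots.mp hz
    rw [h0, show (aeval (0:ℂ)) p = algebraMap ℚ ℂ (p.coeff 0) from eval₂_at_zero _] at hev
    exact hc0 ((map_eq_zero_iff (algebraMap ℚ ℂ) (algebraMap ℚ ℂ).injective).mp hev)
  have hprod : (m.map (fun z => Complex.abs z)).prod = ((|p.coeff 0| : ℚ) : ℝ) := by
    have hmon : (p.map (algebraMap ℚ ℂ)).Monic := (minpoly.monic hint).map _
    have hsp : (p.map (algebraMap ℚ ℂ)).Splits :=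
      IsAlgClosed.splits _
    have h := hsp.coeff_zero_eq_prod_roots_of_monic hmon
    calc (m.map (fun z => Complex.abs z)).prod
        = Complex.abs (m.prod) := (map_multiset_prod Complex.abs m).symm
      _ = Complex.abs ((p.map (algebraMap ℚ ℂ)).coeff 0) := by
          rw [show m = (p.map (algebraMap ℚ ℂ)).roots from hm.trans (aroots_def p ℂ), h,
            map_mul, map_pow, AbsoluteValue.map_neg, map_one, one_pow, one_mul]
      _ = ((|p.coeff 0| : ℚ) : ℝ) := by
          rw [coeff_map, eq_ratCast (algebraMap ℚ ℂ) (p.coeff 0), ← Complex.ofReal_ratCast,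
            Complex.abs_ofReal, ← Rat.cast_abs]
  have hlogsum : (m.map (fun z => Real.log (Complex.abs z))).sum
      = Real.log ((|p.coeff 0| : ℚ) : ℝ) := by
    have h := multiset_log_prod (m.map (fun z => Complex.abs z))
      (by intro x hx
          obtain ⟨z, hz, rfl⟩ := Multiset.mem_map.mp hx
          exact AbsoluteValue.pos _ (hz0 z hz))
    rw [Multiset.map_map] at h
    rw [show (fun z : ℂ => Real.log (Complex.abs z)) = (Real.log ∘ fun z => Complex.abs z)
      from rfl, h, hprod]
  have hd0 : (0:ℝ) < (dstar γ : ℝ) := by exact_mod_cast hmem.1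
  have habs0 : (0:ℚ) < |p.coeff 0| := abs_pos.mpr hc0
  have hge : -(Real.log (dstar γ)) ≤ Real.log ((|p.coeff 0|:ℚ):ℝ) := by
    rw [← Real.log_inv]
    apply Real.log_le_log (by positivity)
    have h1 : (1:ℚ) ≤ |p.coeff 0 * (dstar γ : ℚ)| :=
      den_one_abs_ge (mul_ne_zero hc0 (Nat.cast_ne_zero.mpr hmem.1.ne'))
        (hmem.2 0)
    rw [abs_mul, abs_of_nonneg (by positivity : (0:ℚ) ≤ ((dstar γ : ℕ) : ℚ))] at h1
    rw [inv_le_iff_one_le_mul₀ hd0]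
    exact_mod_cast h1
  have hmapeq : m.map (fun z => logPlus (Complex.abs z)⁻¹)
      = m.map (fun z => logPlus (Complex.abs z) - Real.log (Complex.abs z)) :=
    Multiset.map_congr rfl (fun z hz => logPlus_inv (AbsoluteValue.pos _ (hz0 z hz)))
  rw [hmapeq, multiset_sum_map_sub, hlogsum]
  linarith

lemma height_ge_T (M : IntermediateField ℚ Qbar) [FiniteDimensional ℚ M]
    (γ : Qbar) (hγ : γ ∈ M) (T : Finset (M →ₐ[ℚ] ℂ)) :
    (finrank ℚ M : ℝ)⁻¹ * ∑ ψ ∈ T, logPlus (Complex.abs (ψ ⟨γ, hγ⟩)) ≤ weilHeight γ := by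
  have hN : (0:ℝ) < (finrank ℚ M : ℝ) := by exact_mod_cast Module.finrank_pos
  have hdpos : 0 < (minpoly ℚ γ).natDegree := minpoly.natDegree_pos (isIntegral_qbar γ)
  have hd : (0:ℝ) < ((minpoly ℚ γ).natDegree : ℝ) := by exact_mod_cast hdpos
  set S := (((minpoly ℚ γ).aroots ℂ).map (fun z => logPlus (Complex.abs z))).sum with hS
  have hkey := key_sum M γ hγ (fun z => logPlus (Complex.abs z))
  have h1 : ∑ ψ ∈ T, logPlus (Complex.abs (ψ ⟨γ, hγ⟩))
      ≤ ∑ ψ : M →ₐ[ℚ] ℂ, logPlus (Complex.abs (ψ ⟨γ, hγ⟩)) :=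
    Finset.sum_le_sum_of_subset_of_nonneg (Finset.subset_univ T)
      (fun _ _ _ => logPlus_nonneg _)
  have h2 : (finrank ℚ M : ℝ)⁻¹ * ∑ ψ : M →ₐ[ℚ] ℂ, logPlus (Complex.abs (ψ ⟨γ, hγ⟩))
      = ((minpoly ℚ γ).natDegree : ℝ)⁻¹ * S := by
    rw [inv_mul_eq_div, inv_mul_eq_div, div_eq_div_iff hN.ne' hd.ne']
    linarith [hkey]
  have h3 : ((minpoly ℚ γ).natDegree : ℝ)⁻¹ * S ≤ weilHeight γ := by
    rw [weilHeight_eq]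
    have hlog : 0 ≤ Real.log (dstar γ) :=
      Real.log_nonneg (by exact_mod_cast one_le_dstar γ)
    have hin : (0:ℝ) ≤ ((minpoly ℚ γ).natDegree : ℝ)⁻¹ := by positivity
    apply mul_le_mul_of_nonneg_left (by linarith) hin
  calc (finrank ℚ M : ℝ)⁻¹ * ∑ ψ ∈ T, logPlus (Complex.abs (ψ ⟨γ, hγ⟩))
      ≤ (finrank ℚ M : ℝ)⁻¹ * ∑ ψ : M →ₐ[ℚ] ℂ, logPlus (Complex.abs (ψ ⟨γ, hγ⟩)) :=
        mul_le_mul_of_nonneg_left h1 (by positivity)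
    _ = ((minpoly ℚ γ).natDegree : ℝ)⁻¹ * S := h2
    _ ≤ weilHeight γ := h3

lemma height_ge_T_inv (M : IntermediateField ℚ Qbar) [FiniteDimensional ℚ M]
    (γ : Qbar) (hγ : γ ∈ M) (hγ0 : γ ≠ 0) (T : Finset (M →ₐ[ℚ] ℂ)) :
    (finrank ℚ M : ℝ)⁻¹ * ∑ ψ ∈ T, logPlus (Complex.abs (ψ ⟨γ, hγ⟩))⁻¹ ≤ weilHeight γ := by
  have hN : (0:ℝ) < (finrank ℚ M : ℝ) := by exact_mod_cast Module.finrank_pos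
  have hdpos : 0 < (minpoly ℚ γ).natDegree := minpoly.natDegree_pos (isIntegral_qbar γ)
  have hd : (0:ℝ) < ((minpoly ℚ γ).natDegree : ℝ) := by exact_mod_cast hdpos
  set S' := (((minpoly ℚ γ).aroots ℂ).map (fun z => logPlus (Complex.abs z)⁻¹)).sum with hS'
  have hkey := key_sum M γ hγ (fun z => logPlus (Complex.abs z)⁻¹)
  have h1 : ∑ ψ ∈ T, logPlus (Complex.abs (ψ ⟨γ, hγ⟩))⁻¹
      ≤ ∑ ψ : M →ₐ[ℚ] ℂ, logPlus (Complex.abs (ψ ⟨γ, hγ⟩))⁻¹ :=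
    Finset.sum_le_sum_of_subset_of_nonneg (Finset.subset_univ T)
      (fun _ _ _ => logPlus_nonneg _)
  have h2 : (finrank ℚ M : ℝ)⁻¹ * ∑ ψ : M →ₐ[ℚ] ℂ, logPlus (Complex.abs (ψ ⟨γ, hγ⟩))⁻¹
      = ((minpoly ℚ γ).natDegree : ℝ)⁻¹ * S' := by
    rw [inv_mul_eq_div, inv_mul_eq_div, div_eq_div_iff hN.ne' hd.ne']
    linarith [hkey]
  have h3 : ((minpoly ℚ γ).natDegree : ℝ)⁻¹ * S' ≤ weilHeight γ := by
    rw [weilHeight_eq]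
    have hin : (0:ℝ) ≤ ((minpoly ℚ γ).natDegree : ℝ)⁻¹ := by positivity
    apply mul_le_mul_of_nonneg_left (sum_logPlus_inv_le γ hγ0) hin
  calc (finrank ℚ M : ℝ)⁻¹ * ∑ ψ ∈ T, logPlus (Complex.abs (ψ ⟨γ, hγ⟩))⁻¹
      ≤ (finrank ℚ M : ℝ)⁻¹ * ∑ ψ : M →ₐ[ℚ] ℂ, logPlus (Complex.abs (ψ ⟨γ, hγ⟩))⁻¹ :=
        mul_le_mul_of_nonneg_left h1 (by positivity)
    _ = ((minpoly ℚ γ).natDegree : ℝ)⁻¹ * S' := h2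
    _ ≤ weilHeight γ := h3

lemma pointwise {A B t s : ℝ} (hA : B + 1 < A) (hB : 0 ≤ B) (ht : 0 < t) (hs : 0 ≤ s)
    (hts : A * t - B ≤ s) :
    Real.log (A / (B + 1)) ≤ logPlus t⁻¹ + logPlus s := by
  have hB1 : (0:ℝ) < B + 1 := by linarith
  have hA0 : (0:ℝ) < A := by linarith
  have hmax1 : (0:ℝ) < max 1 t⁻¹ := lt_of_lt_of_le one_pos (le_max_left _ _)
  have hmax2 : (0:ℝ) < max 1 s := lt_of_lt_of_le one_pos (le_max_left _ _)
  have key : A / (B + 1) ≤ max 1 t⁻¹ * max 1 s := by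
    rcases le_total (A * t) (B + 1) with hc | hc
    · have h1 : A / (B+1) ≤ t⁻¹ := by
        rw [show t⁻¹ = 1/t from (one_div t).symm, div_le_div_iff₀ hB1 ht]
        linarith
      calc A / (B+1) ≤ t⁻¹ := h1
        _ ≤ max 1 t⁻¹ := le_max_right _ _
        _ ≤ max 1 t⁻¹ * max 1 s := le_mul_of_one_le_right hmax1.le (le_max_left _ _)
    · have hs1 : (1:ℝ) ≤ s := by linarith
      rcases le_total t 1 with h1 | h1
      · have h2 : A / (B+1) ≤ t⁻¹ * s := by
          rw [inv_mul_eq_div, div_le_div_iff₀ hB1 ht]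
          nlinarith [mul_nonneg hB (by linarith : (0:ℝ) ≤ A*t - (B+1)),
            mul_le_mul_of_nonneg_right hts hB1.le]
        calc A / (B+1) ≤ t⁻¹ * s := h2
          _ ≤ max 1 t⁻¹ * max 1 s :=
            mul_le_mul (le_max_right _ _) (le_max_right _ _) hs hmax1.le
      · have h2 : A / (B+1) ≤ s := by
          rw [div_le_iff₀ hB1]
          nlinarith [mul_nonneg hB (by linarith : (0:ℝ) ≤ A - (B+1)),
            mul_le_mul_of_nonneg_right hts hB1.le,
            mul_le_mul_of_nonneg_left h1 hA0.le]
        calc A / (B+1) ≤ s := h2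
          _ ≤ max 1 s := le_max_right _ _
          _ ≤ max 1 t⁻¹ * max 1 s := le_mul_of_one_le_left hmax2.le (le_max_left _ _)
  calc Real.log (A / (B+1)) ≤ Real.log (max 1 t⁻¹ * max 1 s) :=
        Real.log_le_log (by positivity) key
    _ = logPlus t⁻¹ + logPlus s := by
        unfold logPlus
        rw [Real.log_mul (ne_of_gt hmax1) (ne_of_gt hmax2)]

lemma Kab_finiteDimensional (a b : Qbar) : FiniteDimensional ℚ (Kab a b) := by
  haveI : Finite ({a, b} : Set Qbar) := ((Set.finite_singleton b).insert a).to_subtype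
  haveI : FiniteDimensional ℚ (IntermediateField.adjoin ℚ ({a, b} : Set Qbar)) :=
    IntermediateField.finiteDimensional_adjoin (fun x _ => isIntegral_qbar x)
  unfold Kab
  infer_instance

lemma main_lower (a b : Qbar) (j : Qbar →+* ℂ)
    (σ₀ : Kab a b ≃ₐ[ℚ] Kab a b)
    (h : 1 < Complex.abs (j (sigA a b σ₀)) - Complex.abs (j (sigB a b σ₀)))
    (α : Qbar) (hα0 : α ≠ 0) :
    (Module.finrank ℚ (Kab a b) : ℝ)⁻¹ *
      Real.log (Complex.abs (j (sigA a b σ₀)) / (Complex.abs (j (sigB a b σ₀)) + 1))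
      ≤ hab a b α := by
  classical
  haveI : FiniteDimensional ℚ (Kab a b) := Kab_finiteDimensional a b
  haveI : FiniteDimensional ℚ ℚ⟮α⟯ :=
    IntermediateField.adjoin.finiteDimensional (isIntegral_qbar α)
  set A := Complex.abs (j (sigA a b σ₀)) with hA
  set B := Complex.abs (j (sigB a b σ₀)) with hB
  set M : IntermediateField ℚ Qbar := Kab a b ⊔ ℚ⟮α⟯ with hM
  haveI : FiniteDimensional ℚ M := IntermediateField.finiteDimensional_sup (Kab a b) ℚ⟮α⟯
  have hEM : Kab a b ≤ M := le_sup_left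
  have hαM : α ∈ M := (le_sup_right : ℚ⟮α⟯ ≤ M) (IntermediateField.mem_adjoin_simple_self ℚ α)
  have haM : a ∈ M := hEM (a_mem_Kab a b)
  have hbM : b ∈ M := hEM (b_mem_Kab a b)
  have hβM : a * α + b ∈ M := M.add_mem (M.mul_mem haM hαM) hbM
  set φ₀ : Kab a b →ₐ[ℚ] ℂ := (j.toRatAlgHom.comp (Kab a b).val).comp σ₀.toAlgHom with hφ₀
  set T : Finset (M →ₐ[ℚ] ℂ) :=
    Finset.univ.filter (fun ψ => ψ.comp (IntermediateField.inclusion hEM) = φ₀) with hT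
  have hψa : ∀ ψ ∈ T, ψ ⟨a, haM⟩ = j (sigA a b σ₀) := by
    intro ψ hψ
    have hres : ψ.comp (IntermediateField.inclusion hEM) = φ₀ := (Finset.mem_filter.mp hψ).2
    have h1 : ψ ⟨a, haM⟩ = (ψ.comp (IntermediateField.inclusion hEM)) ⟨a, a_mem_Kab a b⟩ := rfl
    rw [h1, hres]
    rfl
  have hψb : ∀ ψ ∈ T, ψ ⟨b, hbM⟩ = j (sigB a b σ₀) := by
    intro ψ hψ
    have hres : ψ.comp (IntermediateField.inclusion hEM) = φ₀ := (Finset.mem_filter.mp hψ).2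
    have h1 : ψ ⟨b, hbM⟩ = (ψ.comp (IntermediateField.inclusion hEM)) ⟨b, b_mem_Kab a b⟩ := rfl
    rw [h1, hres]
    rfl
  have hTval : ∀ ψ ∈ T, Real.log (A / (B + 1)) ≤
      logPlus (Complex.abs (ψ ⟨α, hαM⟩))⁻¹ + logPlus (Complex.abs (ψ ⟨a*α+b, hβM⟩)) := by
    intro ψ hψ
    have hprodm : (⟨a*α+b, hβM⟩ : M) = ⟨a, haM⟩ * ⟨α, hαM⟩ + ⟨b, hbM⟩ := by
      ext; rfl
    have hprod : ψ ⟨a*α+b, hβM⟩ = ψ ⟨a, haM⟩ * ψ ⟨α, hαM⟩ + ψ ⟨b, hbM⟩ := by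
      rw [hprodm, map_add, map_mul]
    have ht : 0 < Complex.abs (ψ ⟨α, hαM⟩) := by
      apply AbsoluteValue.pos
      have hne : (⟨α, hαM⟩ : M) ≠ 0 := fun hc => hα0 (congrArg Subtype.val hc)
      have hinj : Function.Injective ψ := fun x y hxy => by
        apply RingHom.injective (ψ : M →+* ℂ)
        exact hxy
      exact fun hc => hne ((map_eq_zero_iff ψ hinj).mp hc)
    have hAt : A * Complex.abs (ψ ⟨α, hαM⟩) - B ≤ Complex.abs (ψ ⟨a*α+b, hβM⟩) := by
      have h1 : A * Complex.abs (ψ ⟨α, hαM⟩)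
          = Complex.abs (ψ ⟨a, haM⟩ * ψ ⟨α, hαM⟩) := by
        rw [map_mul, hψa ψ hψ, ← hA]
      have h2 : ψ ⟨a, haM⟩ * ψ ⟨α, hαM⟩ = ψ ⟨a*α+b, hβM⟩ - ψ ⟨b, hbM⟩ := by
        rw [hprod]; ring
      have h3 : Complex.abs (ψ ⟨a*α+b, hβM⟩ - ψ ⟨b, hbM⟩)
          ≤ Complex.abs (ψ ⟨a*α+b, hβM⟩) + Complex.abs (ψ ⟨b, hbM⟩) := by
        simpa [Complex.norm_eq_abs] using norm_sub_le (ψ ⟨a*α+b, hβM⟩) (ψ ⟨b, hbM⟩)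
      have h4 := hψb ψ hψ
      rw [h1, h2, h4]
      rw [h4] at h3
      linarith [h3, hB]
    exact pointwise (by linarith) (AbsoluteValue.nonneg _ _) ht (AbsoluteValue.nonneg _ _) hAt
  have hsum : (T.card : ℝ) * Real.log (A / (B+1)) ≤
      (∑ ψ ∈ T, logPlus (Complex.abs (ψ ⟨α, hαM⟩))⁻¹) +
      (∑ ψ ∈ T, logPlus (Complex.abs (ψ ⟨a*α+b, hβM⟩))) := by
    rw [← Finset.sum_add_distrib]
    calc (T.card : ℝ) * Real.log (A / (B+1)) = ∑ _ψ ∈ T, Real.log (A / (B+1)) := by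
          rw [Finset.sum_const, nsmul_eq_mul]
      _ ≤ _ := Finset.sum_le_sum hTval
  have h1 := height_ge_T_inv M α hαM hα0 T
  have h2 := height_ge_T M (a*α+b) hβM T
  have hTcard : T.card * finrank ℚ (Kab a b) = finrank ℚ M := by
    have := fiber_card (Kab a b) M hEM φ₀
    rwa [Nat.card_eq_fintype_card, Fintype.card_subtype] at this
  have hN : (0:ℝ) < (finrank ℚ M : ℝ) := by exact_mod_cast Module.finrank_pos
  have hD : (0:ℝ) < (finrank ℚ (Kab a b) : ℝ) := by exact_mod_cast Module.finrank_pos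
  have hTcR : (T.card : ℝ) * (finrank ℚ (Kab a b) : ℝ) = (finrank ℚ M : ℝ) := by exact_mod_cast hTcard
  have hTc0 : (T.card : ℝ) ≠ 0 := by
    intro h0
    rw [h0, zero_mul] at hTcR
    linarith
  have heq : (finrank ℚ (Kab a b) : ℝ)⁻¹ * Real.log (A / (B+1))
      = (finrank ℚ M : ℝ)⁻¹ * ((T.card : ℝ) * Real.log (A / (B+1))) := by
    rw [← hTcR, mul_inv]
    field_simp
  rw [heq]
  have h5 : (finrank ℚ M : ℝ)⁻¹ * ((T.card : ℝ) * Real.log (A / (B+1)))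
      ≤ (finrank ℚ M : ℝ)⁻¹ * ((∑ ψ ∈ T, logPlus (Complex.abs (ψ ⟨α, hαM⟩))⁻¹) +
        (∑ ψ ∈ T, logPlus (Complex.abs (ψ ⟨a*α+b, hβM⟩)))) :=
    mul_le_mul_of_nonneg_left hsum (by positivity)
  rw [mul_add] at h5
  show _ ≤ weilHeight α + weilHeight (a * α + b)
  linarith

lemma minpoly_scaleRoots (γ : Qbar) (m : ℚ) (hm : m ≠ 0) :
    minpoly ℚ (algebraMap ℚ Qbar m * γ) = (minpoly ℚ γ).scaleRoots m := by
  have hint := isIntegral_qbar γ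
  set δ := algebraMap ℚ Qbar m * γ with hδ
  have hq'mon : ((minpoly ℚ γ).scaleRoots m).Monic :=
    (monic_scaleRoots_iff m).mpr (minpoly.monic hint)
  have hq'ev : aeval δ ((minpoly ℚ γ).scaleRoots m) = 0 :=
    scaleRoots_aeval_eq_zero (minpoly.aeval ℚ γ)
  have hdvd : minpoly ℚ δ ∣ (minpoly ℚ γ).scaleRoots m := minpoly.dvd ℚ δ hq'ev
  have hγeq : algebraMap ℚ Qbar m⁻¹ * δ = γ := by
    rw [hδ, ← mul_assoc, ← map_mul, inv_mul_cancel₀ hm, map_one, one_mul]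
  have hdvd2 : minpoly ℚ γ ∣ (minpoly ℚ δ).scaleRoots m⁻¹ := by
    apply minpoly.dvd
    rw [← hγeq]
    exact scaleRoots_aeval_eq_zero (minpoly.aeval ℚ δ)
  have hd2 : (minpoly ℚ γ).natDegree ≤ (minpoly ℚ δ).natDegree := by
    have h := Polynomial.natDegree_le_of_dvd hdvd2
      ((monic_scaleRoots_iff m⁻¹).mpr (minpoly.monic (isIntegral_qbar δ))).ne_zero
    rwa [natDegree_scaleRoots] at h
  have := Polynomial.eq_of_monic_of_dvd_of_natDegree_le
    (minpoly.monic (isIntegral_qbar δ)) hq'mon hdvd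
    (by rw [natDegree_scaleRoots]; exact hd2)
  exact this.symm

lemma dstar_le_pow (γ : Qbar) (m : ℕ) (hm : 0 < m)
    (hint : IsIntegral ℤ ((m : Qbar) * γ)) :
    dstar γ ≤ m ^ (minpoly ℚ γ).natDegree := by
  set d := (minpoly ℚ γ).natDegree with hd
  have hmq : ((m:ℕ):ℚ) ≠ 0 := Nat.cast_ne_zero.mpr hm.ne'
  have hcast : algebraMap ℚ Qbar ((m:ℕ):ℚ) = ((m:ℕ) : Qbar) := map_natCast _ m
  have hδ : IsIntegral ℤ (algebraMap ℚ Qbar ((m:ℕ):ℚ) * γ) := by rw [hcast]; exact hint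
  have heq := minpoly_scaleRoots γ ((m:ℕ):ℚ) hmq
  have hdd : (minpoly ℚ (algebraMap ℚ Qbar ((m:ℕ):ℚ) * γ)).natDegree = d := by
    rw [heq, natDegree_scaleRoots]
  have hden : ∀ i, ((minpoly ℚ (algebraMap ℚ Qbar ((m:ℕ):ℚ) * γ)).coeff i).den = 1 := by
    intro i
    rw [minpoly.isIntegrallyClosed_eq_field_fractions' ℚ hδ, coeff_map]
    exact Rat.den_intCast _
  apply Nat.sInf_le
  refine ⟨pow_pos hm d, fun i => ?_⟩
  by_cases hi : i ≤ d
  · have hco : (minpoly ℚ γ).coeff i * ((m:ℚ))^(d - i)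
        = (minpoly ℚ (algebraMap ℚ Qbar ((m:ℕ):ℚ) * γ)).coeff i := by
      rw [heq, coeff_scaleRoots]
    have hkey : (minpoly ℚ γ).coeff i * ((m ^ d : ℕ) : ℚ)
        = (minpoly ℚ (algebraMap ℚ Qbar ((m:ℕ):ℚ) * γ)).coeff i * ((m ^ i : ℕ) : ℚ) := by
      rw [← hco]
      push_cast
      rw [mul_assoc, ← pow_add, Nat.sub_add_cancel hi]
    rw [hkey]
    apply den_mul_eq_one
    rw [hden i]
    exact one_dvd _
  · have h0 : (minpoly ℚ γ).coeff i = 0 := coeff_eq_zero_of_natDegree_lt (by omega)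
    rw [h0, zero_mul]
    rfl

lemma abs_eq_one_of_pow_eq_one {z : ℂ} {n : ℕ} (h : z ^ n = 1) (hn : n ≠ 0) :
    Complex.abs z = 1 := by
  have h3 : (Complex.abs z) ^ n = 1 := by
    rw [← map_pow, h, map_one]
  have h4 : (0:ℝ) ≤ Complex.abs z := AbsoluteValue.nonneg _ _
  rcases lt_trichotomy (Complex.abs z) 1 with hlt | heq | hgt
  · exfalso
    have := pow_lt_one₀ h4 hlt hn
    rw [h3] at this
    exact lt_irrefl 1 this
  · exact heq
  · exfalso
    have := one_lt_pow₀ hgt hn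
    rw [h3] at this
    exact lt_irrefl 1 this

lemma weilHeight_rootOfUnity (ζ : Qbar) (n : ℕ) (hn : 0 < n) (hζ : ζ ^ n = 1) :
    weilHeight ζ = 0 := by
  have hζint : IsIntegral ℤ ζ :=
    ⟨X ^ n - C 1, monic_X_pow_sub_C _ hn.ne', by simp [hζ]⟩
  have h1 : dstar ζ = 1 := by
    refine le_antisymm (Nat.sInf_le ⟨one_pos, fun i => ?_⟩) (one_le_dstar ζ)
    rw [minpoly.isIntegrallyClosed_eq_field_fractions' ℚ hζint, coeff_map, Nat.cast_one,
      mul_one]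
    exact Rat.den_intCast _
  have h2 : ∀ x ∈ ((minpoly ℚ ζ).aroots ℂ).map (fun z => logPlus (Complex.abs z)),
      x = 0 := by
    intro x hx
    obtain ⟨z, hz, rfl⟩ := Multiset.mem_map.mp hx
    have hdvd : minpoly ℚ ζ ∣ X ^ n - C 1 := minpoly.dvd ℚ ζ (by simp [hζ])
    obtain ⟨-, hev⟩ := mem_aroots.mp hz
    have hzn : z ^ n = 1 := by
      obtain ⟨c, hc⟩ := hdvd
      have : aeval z (X ^ n - C 1 : Polynomial ℚ) = 0 := by
        rw [hc, map_mul, hev, zero_mul]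
      have h' : z ^ n - 1 = 0 := by simpa using this
      linear_combination h'
    have habs1 : Complex.abs z = 1 := abs_eq_one_of_pow_eq_one hzn hn.ne'
    rw [habs1]
    unfold logPlus
    rw [max_self, Real.log_one]
  rw [weilHeight_eq, h1, Nat.cast_one, Real.log_one, Multiset.sum_eq_zero h2, add_zero,
    mul_zero]

lemma exists_algHom_of_aroot (γ : Qbar) (z : ℂ) (hz : z ∈ (minpoly ℚ γ).aroots ℂ) :
    ∃ ψ : Qbar →ₐ[ℚ] ℂ, ψ γ = z := by
  have hint := isIntegral_qbar γ
  set φ : ℚ⟮γ⟯ →ₐ[ℚ] ℂ :=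
    (IntermediateField.algHomAdjoinIntegralEquiv ℚ (K := ℂ) hint).symm ⟨z, hz⟩ with hφ
  letI : Algebra ℚ⟮γ⟯ ℂ := φ.toRingHom.toAlgebra
  haveI : IsScalarTower ℚ ℚ⟮γ⟯ ℂ := IsScalarTower.of_algebraMap_eq fun r => (φ.commutes r).symm
  haveI : Algebra.IsAlgebraic ℚ Qbar := AlgebraicClosure.isAlgebraic ℚ
  haveI : Algebra.IsAlgebraic ℚ⟮γ⟯ Qbar := Algebra.IsAlgebraic.tower_top (K := ℚ) ℚ⟮γ⟯
  set ψ' : Qbar →ₐ[ℚ⟮γ⟯] ℂ := IsAlgClosed.lift with hψ'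
  refine ⟨ψ'.restrictScalars ℚ, ?_⟩
  show ψ' (algebraMap ℚ⟮γ⟯ Qbar (AdjoinSimple.gen ℚ γ)) = z
  rw [ψ'.commutes]
  exact IntermediateField.algHomAdjoinIntegralEquiv_symm_apply_gen ℚ hint ⟨z, hz⟩

lemma rootsOfUnity_infinite : {x : Qbar | ∃ n : ℕ, 0 < n ∧ x ^ n = 1}.Infinite := by
  classical
  intro hfin
  set N := hfin.toFinset.card with hN
  set p : Polynomial Qbar := X ^ (N+1) - C 1 with hp
  have hmon : p.Monic := monic_X_pow_sub_C 1 (Nat.succ_ne_zero N)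
  have hsep : p.Separable := by
    apply separable_X_pow_sub_C 1 _ one_ne_zero
    exact_mod_cast (Nat.cast_ne_zero (R := Qbar)).mpr (Nat.succ_ne_zero N)
  have hnodup : p.roots.Nodup := Polynomial.nodup_roots hsep
  have hcard : p.roots.card = N + 1 := by
    have hsplit : p.Splits := IsAlgClosed.splits p
    rw [splits_iff_card_roots.mp hsplit, hp, natDegree_X_pow_sub_C]
  have hsub : p.roots.toFinset ⊆ hfin.toFinset := by
    intro z hz
    rw [Multiset.mem_toFinset] at hz
    rw [Set.Finite.mem_toFinset]
    have hroot := isRoot_of_mem_roots hz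
    have : z ^ (N+1) = 1 := by
      have h' : z ^ (N+1) - 1 = 0 := by simpa [hp] using hroot
      linear_combination h'
    exact ⟨N+1, Nat.succ_pos N, this⟩
  have hle : N + 1 ≤ N := by
    calc N + 1 = p.roots.toFinset.card := by
          rw [Multiset.toFinset_card_of_nodup hnodup, hcard]
      _ ≤ N := Finset.card_le_card hsub
  omega

lemma qbar_isAlgebraic_int (γ : Qbar) : IsAlgebraic ℤ γ := by
  haveI : IsScalarTower ℤ ℚ Qbar := inferInstance
  exact (IsFractionRing.isAlgebraic_iff ℤ ℚ Qbar).mpr (isIntegral_qbar γ).isAlgebraic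

lemma exists_nat_multiple_integral (γ : Qbar) :
    ∃ m : ℕ, 0 < m ∧ IsIntegral ℤ ((m : Qbar) * γ) := by
  obtain ⟨k, hk0, hky⟩ := (qbar_isAlgebraic_int γ).exists_integral_multiple
  refine ⟨k.natAbs, Int.natAbs_pos.mpr hk0, ?_⟩
  have hy : IsIntegral ℤ (algebraMap ℤ Qbar k * γ) := by rw [← Algebra.smul_def]; exact hky
  have hc : ((k.natAbs : ℕ) : Qbar) = algebraMap ℤ Qbar ((k.natAbs : ℕ) : ℤ) := by
    exact (map_natCast (algebraMap ℤ Qbar) k.natAbs).symm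
  have key : ((k.natAbs : ℕ) : Qbar) * γ = algebraMap ℤ Qbar k * γ
      ∨ ((k.natAbs : ℕ) : Qbar) * γ = -(algebraMap ℤ Qbar k * γ) := by
    rcases Int.natAbs_eq k with h | h
    · left; rw [hc, ← h]
    · right
      rw [hc, show ((k.natAbs : ℕ) : ℤ) = -k from by omega, map_neg, neg_mul]
  rcases key with hcase | hcase
  · rw [hcase]; exact hy
  · rw [hcase]; exact hy.neg

lemma exists_theta (a b : Qbar) : ∃ θ : ℝ, {α : Qbar | hab a b α ≤ θ}.Infinite := by
  classical
  obtain ⟨ma, hma0, hma⟩ := exists_nat_multiple_integral a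
  obtain ⟨mb, hmb0, hmb⟩ := exists_nat_multiple_integral b
  set m := ma * mb with hm
  have hm0 : 0 < m := Nat.mul_pos hma0 hmb0
  have hnat : ∀ k : ℕ, IsIntegral ℤ ((k : Qbar)) := by
    intro k
    have : ((k:ℕ) : Qbar) = algebraMap ℤ Qbar (k:ℤ) := by
      exact (map_natCast (algebraMap ℤ Qbar) k).symm
    rw [this]
    exact isIntegral_algebraMap
  have hmaInt : IsIntegral ℤ ((m : Qbar) * a) := by
    have heq : ((m:ℕ) : Qbar) * a = ((mb:ℕ) : Qbar) * (((ma:ℕ) : Qbar) * a) := by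
      rw [hm]
      push_cast
      ring
    rw [heq]
    exact (hnat mb).mul hma
  have hmbInt : IsIntegral ℤ ((m : Qbar) * b) := by
    have heq : ((m:ℕ) : Qbar) * b = ((ma:ℕ) : Qbar) * (((mb:ℕ) : Qbar) * b) := by
      rw [hm]
      push_cast
      ring
    rw [heq]
    exact (hnat ma).mul hmb
  set Ca := 1 + (((minpoly ℚ a).aroots ℂ).map (fun z => Complex.abs z)).sum with hCa
  set Cb := 1 + (((minpoly ℚ b).aroots ℂ).map (fun z => Complex.abs z)).sum with hCb
  have habssum : ∀ (c : Qbar), 0 ≤ (((minpoly ℚ c).aroots ℂ).map (fun z => Complex.abs z)).sum := by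
    intro c
    apply Multiset.sum_nonneg
    intro x hx
    obtain ⟨z, _, rfl⟩ := Multiset.mem_map.mp hx
    exact AbsoluteValue.nonneg _ _
  have hCa1 : 1 ≤ Ca := le_add_of_nonneg_right (habssum a)
  have hCb1 : 1 ≤ Cb := le_add_of_nonneg_right (habssum b)
  have hC1 : 1 ≤ Ca + Cb := by linarith
  have hCpos : (0:ℝ) < Ca + Cb := by linarith
  have hLnn : 0 ≤ Real.log (Ca + Cb) := Real.log_nonneg hC1
  refine ⟨Real.log (ma * mb : ℕ) + Real.log (Ca + Cb), ?_⟩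
  apply Set.Infinite.mono ?_ rootsOfUnity_infinite
  intro ζ hζ
  obtain ⟨n, hn, hζn⟩ := hζ
  show hab a b ζ ≤ Real.log (ma * mb : ℕ) + Real.log (Ca + Cb)
  have hwζ : weilHeight ζ = 0 := weilHeight_rootOfUnity ζ n hn hζn
  set γ := a * ζ + b with hγ
  have hζint : IsIntegral ℤ ζ :=
    ⟨X ^ n - C 1, monic_X_pow_sub_C _ hn.ne', by simp [hζn]⟩
  have hγint : IsIntegral ℤ (((ma * mb : ℕ) : Qbar) * γ) := by
    have heq : ((ma * mb : ℕ) : Qbar) * γ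
        = (((ma * mb : ℕ) : Qbar) * a) * ζ + (((ma * mb : ℕ) : Qbar) * b) := by
      rw [hγ]; ring
    rw [heq]
    exact (hmaInt.mul hζint).add hmbInt
  have hdstar : dstar γ ≤ (ma * mb) ^ (minpoly ℚ γ).natDegree :=
    dstar_le_pow γ (ma * mb) hm0 hγint
  set d := (minpoly ℚ γ).natDegree with hd
  have hdpos : 0 < d := minpoly.natDegree_pos (isIntegral_qbar γ)
  have hdR : (0:ℝ) < (d:ℝ) := by exact_mod_cast hdpos
  have hlog1 : Real.log (dstar γ) ≤ (d:ℝ) * Real.log (ma * mb : ℕ) := by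
    have h1 : Real.log (dstar γ) ≤ Real.log (((ma * mb : ℕ):ℝ) ^ d) := by
      apply Real.log_le_log (by exact_mod_cast (dstar_mem γ).1)
      exact_mod_cast hdstar
    rwa [Real.log_pow] at h1
  have hroots : ∀ x ∈ ((minpoly ℚ γ).aroots ℂ).map (fun z => logPlus (Complex.abs z)),
      x ≤ Real.log (Ca + Cb) := by
    intro x hx
    obtain ⟨z, hz, rfl⟩ := Multiset.mem_map.mp hx
    obtain ⟨ψ, hψ⟩ := exists_algHom_of_aroot γ z hz
    have hψa : Complex.abs (ψ a) ≤ Ca := by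
      have hmem : ψ a ∈ (minpoly ℚ a).aroots ℂ := by
        rw [mem_aroots]
        exact ⟨minpoly.ne_zero (isIntegral_qbar a),
          by rw [Polynomial.aeval_algHom_apply, minpoly.aeval, map_zero]⟩
      have := Multiset.single_le_sum
        (by intro y hy
            obtain ⟨w, _, rfl⟩ := Multiset.mem_map.mp hy
            exact AbsoluteValue.nonneg _ _)
        (Complex.abs (ψ a)) (Multiset.mem_map_of_mem _ hmem)
      rw [hCa]
      linarith
    have hψb : Complex.abs (ψ b) ≤ Cb := by
      have hmem : ψ b ∈ (minpoly ℚ b).aroots ℂ := by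
        rw [mem_aroots]
        exact ⟨minpoly.ne_zero (isIntegral_qbar b),
          by rw [Polynomial.aeval_algHom_apply, minpoly.aeval, map_zero]⟩
      have := Multiset.single_le_sum
        (by intro y hy
            obtain ⟨w, _, rfl⟩ := Multiset.mem_map.mp hy
            exact AbsoluteValue.nonneg _ _)
        (Complex.abs (ψ b)) (Multiset.mem_map_of_mem _ hmem)
      rw [hCb]
      linarith
    have hψζ : Complex.abs (ψ ζ) = 1 := by
      have hpow : (ψ ζ) ^ n = 1 := by
        rw [← map_pow, hζn, map_one]
      exact abs_eq_one_of_pow_eq_one hpow hn.ne'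
    have hzval : z = ψ a * ψ ζ + ψ b := by
      rw [← hψ, hγ, map_add, map_mul]
    have hzabs : Complex.abs z ≤ Ca + Cb := by
      rw [hzval]
      calc Complex.abs (ψ a * ψ ζ + ψ b)
          ≤ Complex.abs (ψ a * ψ ζ) + Complex.abs (ψ b) := AbsoluteValue.add_le _ _ _
        _ = Complex.abs (ψ a) + Complex.abs (ψ b) := by rw [map_mul, hψζ, mul_one]
        _ ≤ Ca + Cb := add_le_add hψa hψb
    unfold logPlus
    apply Real.log_le_log (by positivity)
    exact max_le hC1 hzabs
  have hsum2 : (((minpoly ℚ γ).aroots ℂ).map (fun z => logPlus (Complex.abs z))).sum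
      ≤ (d:ℝ) * Real.log (Ca + Cb) := by
    have hcard : Multiset.card (((minpoly ℚ γ).aroots ℂ).map
        (fun z => logPlus (Complex.abs z))) ≤ d := by
      rw [Multiset.card_map]
      calc Multiset.card ((minpoly ℚ γ).aroots ℂ) ≤ ((minpoly ℚ γ).map (algebraMap ℚ ℂ)).natDegree := by
            rw [aroots_def]
            exact card_roots' _
        _ = d := natDegree_map _
    calc (((minpoly ℚ γ).aroots ℂ).map (fun z => logPlus (Complex.abs z))).sum
        ≤ (Multiset.card (((minpoly ℚ γ).aroots ℂ).map (fun z => logPlus (Complex.abs z))))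
            • Real.log (Ca + Cb) := Multiset.sum_le_card_nsmul _ _ hroots
      _ = (Multiset.card (((minpoly ℚ γ).aroots ℂ).map (fun z => logPlus (Complex.abs z))) : ℝ)
            * Real.log (Ca + Cb) := by rw [nsmul_eq_mul]
      _ ≤ (d:ℝ) * Real.log (Ca + Cb) := by
          apply mul_le_mul_of_nonneg_right _ hLnn
          exact_mod_cast hcard
  have hwγ : weilHeight γ ≤ Real.log (ma * mb : ℕ) + Real.log (Ca + Cb) := by
    rw [weilHeight_eq]
    have h1 : Real.log (dstar γ)
        + (((minpoly ℚ γ).aroots ℂ).map (fun z => logPlus (Complex.abs z))).sum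
        ≤ (d:ℝ) * (Real.log (ma * mb : ℕ) + Real.log (Ca + Cb)) := by
      rw [mul_add]
      exact add_le_add hlog1 hsum2
    calc ((d:ℕ):ℝ)⁻¹ * (Real.log (dstar γ)
        + (((minpoly ℚ γ).aroots ℂ).map (fun z => logPlus (Complex.abs z))).sum)
        ≤ ((d:ℕ):ℝ)⁻¹ * ((d:ℝ) * (Real.log (ma * mb : ℕ) + Real.log (Ca + Cb))) :=
          mul_le_mul_of_nonneg_left h1 (by positivity)
      _ = Real.log (ma * mb : ℕ) + Real.log (Ca + Cb) := by
          rw [← mul_assoc, inv_mul_cancel₀ (ne_of_gt hdR), one_mul]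
  show weilHeight ζ + weilHeight (a * ζ + b) ≤ _
  rw [hwζ, zero_add]
  exact hwγ

/-- If `b ≠ 0` and some `σ₀ ∈ G(a,b)` satisfies `|σ₀(a)| - |σ₀(b)| > 1` (via a fixed
embedding `j : ℚ̄ → ℂ`), then
`(1/[K_{a,b}:ℚ]) · log(|σ₀(a)|/(|σ₀(b)| + 1)) ≤ μ^ess(h_{a,b})`. -/
theorem essMin_hab_ge_of_big_a (a b : Qbar) (ha : a ≠ 0) (hb : b ≠ 0) (j : Qbar →+* ℂ)
    (σ₀ : Kab a b ≃ₐ[ℚ] Kab a b)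
    (h : 1 < ‖j (sigA a b σ₀)‖ - ‖j (sigB a b σ₀)‖) :
    (Module.finrank ℚ (Kab a b) : ℝ)⁻¹ *
      Real.log (‖j (sigA a b σ₀)‖ / (‖j (sigB a b σ₀)‖ + 1))
      ≤ essMin (hab a b) := by
  obtain ⟨θ₀, hθ₀⟩ := exists_theta a b
  refine le_csInf ⟨θ₀, hθ₀⟩ ?_
  intro θ hθ
  obtain ⟨α, hα⟩ := ((hθ : {α : Qbar | hab a b α ≤ θ}.Infinite).diff
    (Set.finite_singleton 0)).nonempty
  have hα0 : α ≠ 0 := by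
    intro h0
    exact hα.2 (by rw [h0]; rfl)
  exact le_trans (main_lower a b j σ₀ h α hα0) hα.1

end
end
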